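/- Let μ_sc be the Borel measure on ℝ with density f(x) = (1/(2π))·√(max(4 − x², 0)) with respect to Lebesgue measure (the standard semicircle law). Then (i) μ_sc is a probability measure, and (ii) for every z ∈ ℂ with Im z ≠ 0, the Stieltjes transform S(z) = ∫_ℝ 1/(z−x) μ_sc(dx) satisfies S(z)² − z·S(z) + 1 = 0. -/

import Mathlib

/-!
Substituting `x = 2 cos θ` turns integration against the semicircle law into
`(2/π) ∫₀^π sin² θ f(2 cos θ) dθ`; for `f = 1` this gives total mass `1`. Every nonreal `z` is
`a + a⁻¹` with `0 < ‖a‖ < 1`, and `4 sin² θ = (4 - z²) + (z - 2 cos θ)(z + 2 cos θ)` reduces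
`S(z)` to `∫₀^π (z - 2 cos θ)⁻¹ dθ`. On the unit circle `w = e^{iθ}` this is the contour integral
of `((w - a)(w - a⁻¹))⁻¹`, which Cauchy's formula evaluates; the outcome is `S(z) = a`, a root of
`G² - zG + 1`.
-/

open MeasureTheory Real Set

noncomputable section

def semicircleDensity (x : ℝ) : ℝ := 1 / (2 * π) * √(max (4 - x ^ 2) 0)

def semicircle : Measure ℝ :=
  volume.withDensity fun x => ENNReal.ofReal (semicircleDensity x)

def stieltjesTransform (μ : Measure ℝ) (z : ℂ) : ℂ := ∫ x, 1 / (z - x) ∂μ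

lemma semicircleDensity_nonneg (x : ℝ) : 0 ≤ semicircleDensity x := by
  unfold semicircleDensity; positivity

lemma continuous_semicircleDensity : Continuous semicircleDensity := by
  unfold semicircleDensity; fun_prop

lemma semicircleDensity_eq_zero_of_notMem_Icc {x : ℝ} (hx : x ∉ Icc (-2) 2) : semicircleDensity x = 0 := by
  have : 4 - x ^ 2 ≤ 0 := by
    rw [mem_Icc, not_and_or, not_le, not_le] at hx
    rcases hx with hx | hx <;> nlinarith
  simp [semicircleDensity, max_eq_right this]

lemma semicircleDensity_two_mul_cos {θ : ℝ} (hθ : θ ∈ Icc 0 π) :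
    semicircleDensity (2 * cos θ) = sin θ / π := by
  have hsin : 0 ≤ sin θ := sin_nonneg_of_nonneg_of_le_pi hθ.1 hθ.2
  have : 4 - (2 * cos θ) ^ 2 = (2 * sin θ) ^ 2 := by
    linear_combination -4 * sin_sq_add_cos_sq θ
  rw [semicircleDensity, this, max_eq_left (sq_nonneg _), sqrt_sq (by positivity)]
  field_simp

variable {E : Type*} [NormedAddCommGroup E] [NormedSpace ℝ E]

lemma integral_semicircleDensity_smul (f : ℝ → E) :
    ∫ x, semicircleDensity x • f x = (2 / π) • ∫ θ in 0..π, sin θ ^ 2 • f (2 * cos θ) := by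
  have hsupp : ∫ x, semicircleDensity x • f x = ∫ x in -2..2, semicircleDensity x • f x := by
    rw [← setIntegral_eq_integral_of_forall_compl_eq_zero
      (fun x hx => by rw [semicircleDensity_eq_zero_of_notMem_Icc hx, zero_smul]),
      integral_Icc_eq_integral_Ioc, intervalIntegral.integral_of_le (by norm_num)]
  have hsubst := intervalIntegral.integral_deriv_smul_comp_of_deriv_nonpos (a := 0) (b := π)
    (f := fun θ => 2 * cos θ) (f' := fun θ => -(2 * sin θ))
    (g := fun x => semicircleDensity x • f x) (by fun_prop)
    (fun θ _ => ((hasDerivAt_cos θ).const_mul 2).congr_deriv (by ring))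
    (fun θ hθ => by
      rw [min_eq_left pi_pos.le, max_eq_right pi_pos.le] at hθ
      linarith [sin_pos_of_pos_of_lt_pi hθ.1 hθ.2])
  simp only [Function.comp_apply, cos_zero, cos_pi, mul_one, mul_neg] at hsubst
  rw [hsupp, intervalIntegral.integral_symm, ← hsubst, ← intervalIntegral.integral_neg,
    ← intervalIntegral.integral_smul]
  refine intervalIntegral.integral_congr fun θ hθ => ?_
  rw [uIcc_of_le pi_pos.le] at hθ
  simp only [semicircleDensity_two_mul_cos hθ, smul_smul, ← neg_smul]
  congr 1
  field_simp

lemma integral_semicircleDensity : ∫ x, semicircleDensity x = 1 := by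
  have := integral_semicircleDensity_smul (fun _ => (1 : ℝ))
  simp only [smul_eq_mul, mul_one] at this
  rw [this, integral_sin_sq]
  simp only [sin_zero, sin_pi]
  field_simp
  ring

lemma integrable_semicircleDensity : Integrable semicircleDensity :=
  continuous_semicircleDensity.integrable_of_hasCompactSupport <|
    HasCompactSupport.intro isCompact_Icc fun _ => semicircleDensity_eq_zero_of_notMem_Icc

instance isProbabilityMeasure_semicircle : IsProbabilityMeasure semicircle := by
  constructor
  rw [semicircle, withDensity_apply _ MeasurableSet.univ, Measure.restrict_univ,
    ← ofReal_integral_eq_lintegral_ofReal integrable_semicircleDensity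
      (Filter.Eventually.of_forall semicircleDensity_nonneg),
    integral_semicircleDensity, ENNReal.ofReal_one]

lemma integral_semicircle (f : ℝ → E) :
    ∫ x, f x ∂semicircle = ∫ x, semicircleDensity x • f x := by
  rw [semicircle, integral_withDensity_eq_integral_toReal_smul
    continuous_semicircleDensity.measurable.ennreal_ofReal
    (Filter.Eventually.of_forall fun _ => ENNReal.ofReal_lt_top)]
  simp only [ENNReal.toReal_ofReal (semicircleDensity_nonneg _)]

lemma integral_comp_cos_zero_two_pi (f : ℝ → E)
    (hf : IntervalIntegrable (fun θ => f (cos θ)) volume 0 π) :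
    ∫ θ in 0..2 * π, f (cos θ) = (2 : ℝ) • ∫ θ in 0..π, f (cos θ) := by
  have hreflect : ∫ θ in π..2 * π, f (cos θ) = ∫ θ in 0..π, f (cos θ) := by
    simpa [cos_sub, two_mul] using
      (intervalIntegral.integral_comp_sub_left (fun θ => f (cos θ)) (2 * π)
        (a := 0) (b := π)).symm
  have hf' : IntervalIntegrable (fun θ => f (cos θ)) volume π (2 * π) := by
    simpa [cos_sub, two_mul] using (hf.comp_sub_left (2 * π)).symm
  rw [← intervalIntegral.integral_add_adjacent_intervals hf hf', hreflect, two_smul]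

lemma circleMap_sub_mul_circleMap_sub_inv {a : ℂ} (ha : a ≠ 0) (θ : ℝ) :
    (circleMap 0 1 θ - a) * (circleMap 0 1 θ - a⁻¹) =
      circleMap 0 1 θ * (2 * cos θ - (a + a⁻¹)) := by
  have hw : circleMap 0 1 θ * Complex.exp (-θ * Complex.I) = 1 := by
    simp [circleMap, ← Complex.exp_add]
  have h2cos : 2 * (cos θ : ℂ) = circleMap 0 1 θ + Complex.exp (-θ * Complex.I) := by
    rw [Complex.ofReal_cos, Complex.two_cos]
    simp [circleMap]
  rw [h2cos]
  linear_combination (-1 : ℂ) * hw + mul_inv_cancel₀ ha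

lemma add_inv_sub_two_mul_cos_ne_zero {a : ℂ} (ha0 : a ≠ 0) (ha : ‖a‖ ≠ 1) (θ : ℝ) :
    a + a⁻¹ - 2 * cos θ ≠ 0 := by
  intro h
  have hfac := circleMap_sub_mul_circleMap_sub_inv ha0 θ
  rw [show 2 * (cos θ : ℂ) - (a + a⁻¹) = 0 by linear_combination -h, mul_zero] at hfac
  have hnorm : ‖circleMap 0 1 θ‖ = 1 := by simp
  rcases mul_eq_zero.1 hfac with h | h
  · exact ha (sub_eq_zero.1 h ▸ hnorm)
  · exact ha (by simpa [sub_eq_zero.1 h] using hnorm)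

lemma continuous_inv_add_inv_sub_two_mul_cos {a : ℂ} (ha0 : a ≠ 0) (ha : ‖a‖ ≠ 1) :
    Continuous fun θ : ℝ => (a + a⁻¹ - 2 * cos θ)⁻¹ :=
  (by fun_prop : Continuous fun θ : ℝ => a + a⁻¹ - 2 * cos θ).inv₀
    (add_inv_sub_two_mul_cos_ne_zero ha0 ha)

lemma one_lt_norm_inv {𝕜 : Type*} [NormedDivisionRing 𝕜] {a : 𝕜} (ha0 : a ≠ 0) (ha : ‖a‖ < 1) :
    1 < ‖a⁻¹‖ := by
  rw [norm_inv]
  exact (one_lt_inv₀ (norm_pos_iff.2 ha0)).2 ha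

lemma integral_inv_add_inv_sub_two_mul_cos_zero_two_pi {a : ℂ} (ha0 : a ≠ 0) (ha : ‖a‖ < 1) :
    ∫ θ in 0..2 * π, (a + a⁻¹ - 2 * cos θ)⁻¹ = 2 * π / (a⁻¹ - a) := by
  have hinv := one_lt_norm_inv ha0 ha
  have hd : DifferentiableOn ℂ (fun w => (w - a⁻¹)⁻¹) (Metric.closedBall 0 1) := by
    intro w hw
    have hw' : w - a⁻¹ ≠ 0 := by
      rw [sub_ne_zero]; rintro rfl
      exact (mem_closedBall_zero_iff.1 hw).not_gt hinv
    exact DifferentiableAt.differentiableWithinAt (by fun_prop (disch := exact hw'))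
  have hcauchy := hd.circleIntegral_sub_inv_smul (mem_ball_zero_iff.2 ha)
  have hintegrand (θ : ℝ) : deriv (circleMap 0 1) θ •
      ((circleMap 0 1 θ - a)⁻¹ • (circleMap 0 1 θ - a⁻¹)⁻¹) =
        -Complex.I * (a + a⁻¹ - 2 * cos θ)⁻¹ := by
    have hw : circleMap 0 1 θ ≠ 0 := circleMap_ne_center one_ne_zero
    have hz := add_inv_sub_two_mul_cos_ne_zero ha0 ha.ne θ
    rw [deriv_circleMap, smul_eq_mul, smul_eq_mul, ← mul_inv,
      circleMap_sub_mul_circleMap_sub_inv ha0, ← neg_sub (a + a⁻¹), mul_neg, inv_neg]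
    field_simp
  rw [circleIntegral] at hcauchy
  simp_rw [hintegrand] at hcauchy
  rw [intervalIntegral.integral_const_mul, smul_eq_mul] at hcauchy
  rw [← neg_sub a, div_neg, div_eq_mul_inv]
  linear_combination Complex.I * hcauchy +
    ((∫ θ in 0..2 * π, (a + a⁻¹ - 2 * cos θ)⁻¹) + 2 * π * (a - a⁻¹)⁻¹) * Complex.I_sq

lemma integral_inv_add_inv_sub_two_mul_cos_zero_pi {a : ℂ} (ha0 : a ≠ 0) (ha : ‖a‖ < 1) :
    ∫ θ in 0..π, (a + a⁻¹ - 2 * cos θ)⁻¹ = π / (a⁻¹ - a) := by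
  have hcont := continuous_inv_add_inv_sub_two_mul_cos ha0 ha.ne
  have hdouble := integral_comp_cos_zero_two_pi (fun t : ℝ => (a + a⁻¹ - 2 * t)⁻¹)
    (hcont.intervalIntegrable 0 π)
  rw [integral_inv_add_inv_sub_two_mul_cos_zero_two_pi ha0 ha, Complex.real_smul,
    Complex.ofReal_ofNat] at hdouble
  linear_combination -hdouble / 2

lemma sin_sq_smul_one_div_sub_two_mul_cos {z : ℂ} {θ : ℝ} (hz : z - 2 * cos θ ≠ 0) :
    (sin θ ^ 2 : ℝ) • (1 / (z - ↑(2 * cos θ))) =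
      (4 - z ^ 2) / 4 * (z - 2 * cos θ)⁻¹ + (z + 2 * cos θ) / 4 := by
  have hpyth : (sin θ : ℂ) ^ 2 + (cos θ : ℂ) ^ 2 = 1 := by exact_mod_cast sin_sq_add_cos_sq θ
  rw [Complex.real_smul, Complex.ofReal_mul, Complex.ofReal_pow, Complex.ofReal_ofNat]
  field_simp
  linear_combination 4 * hpyth

lemma integral_add_two_mul_cos_zero_pi (z : ℂ) : ∫ θ in 0..π, (z + 2 * cos θ) = z * π := by
  rw [intervalIntegral.integral_add intervalIntegrable_const
    ((by fun_prop : Continuous fun θ : ℝ => 2 * (cos θ : ℂ)).intervalIntegrable _ _),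
    intervalIntegral.integral_const, intervalIntegral.integral_const_mul,
    intervalIntegral.integral_ofReal, integral_cos]
  simp [mul_comm]

theorem stieltjesTransform_semicircle_add_inv {a : ℂ} (ha0 : a ≠ 0) (ha : ‖a‖ < 1) :
    stieltjesTransform semicircle (a + a⁻¹) = a := by
  have hne := add_inv_sub_two_mul_cos_ne_zero ha0 ha.ne
  have hcont := continuous_inv_add_inv_sub_two_mul_cos ha0 ha.ne
  rw [stieltjesTransform, integral_semicircle, integral_semicircleDensity_smul]
  simp_rw [sin_sq_smul_one_div_sub_two_mul_cos (hne _)]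
  rw [intervalIntegral.integral_add ((hcont.intervalIntegrable 0 π).const_mul _)
    ((by fun_prop : Continuous fun θ : ℝ => (a + a⁻¹ + 2 * cos θ) / 4).intervalIntegrable _ _),
    intervalIntegral.integral_const_mul, intervalIntegral.integral_div,
    integral_add_two_mul_cos_zero_pi,
    integral_inv_add_inv_sub_two_mul_cos_zero_pi ha0 ha, Complex.real_smul]
  have hba : a⁻¹ - a ≠ 0 := sub_ne_zero.2 fun h => (h ▸ one_lt_norm_inv ha0 ha).not_gt ha
  rw [show 4 - (a + a⁻¹) ^ 2 = -(a⁻¹ - a) ^ 2 by linear_combination -4 * mul_inv_cancel₀ ha0]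
  push_cast
  field_simp
  ring

lemma exists_add_inv_eq (z : ℂ) : ∃ a : ℂ, a ≠ 0 ∧ a + a⁻¹ = z := by
  obtain ⟨a, ha⟩ := exists_quadratic_eq_zero (K := ℂ) one_ne_zero
    (IsAlgClosed.exists_eq_mul_self (discrim 1 (-z) 1))
  have ha0 : a ≠ 0 := by rintro rfl; simp at ha
  exact ⟨a, ha0, by field_simp; linear_combination ha⟩

lemma exists_norm_le_one_add_inv_eq (z : ℂ) : ∃ a : ℂ, a ≠ 0 ∧ ‖a‖ ≤ 1 ∧ a + a⁻¹ = z := by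
  obtain ⟨a, ha0, rfl⟩ := exists_add_inv_eq z
  rcases le_total ‖a‖ 1 with ha | ha
  · exact ⟨a, ha0, ha, rfl⟩
  · exact ⟨a⁻¹, inv_ne_zero ha0, by rw [norm_inv]; exact inv_le_one_of_one_le₀ ha,
      by rw [inv_inv, add_comm]⟩

lemma im_add_inv_eq_zero_of_norm_eq_one {a : ℂ} (ha : ‖a‖ = 1) : (a + a⁻¹).im = 0 := by
  rw [Complex.add_im, Complex.inv_im, Complex.normSq_eq_norm_sq, ha]
  ring

lemma exists_norm_lt_one_add_inv_eq {z : ℂ} (hz : z.im ≠ 0) :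
    ∃ a : ℂ, a ≠ 0 ∧ ‖a‖ < 1 ∧ a + a⁻¹ = z := by
  obtain ⟨a, ha0, ha, rfl⟩ := exists_norm_le_one_add_inv_eq z
  exact ⟨a, ha0, ha.lt_of_ne fun h => hz (im_add_inv_eq_zero_of_norm_eq_one h), rfl⟩

end

/-- the semicircle law μ_sc with density (1/2π)√(max(4−x²,0)) is a
probability measure and its Stieltjes transform S(z) = ∫ 1/(z−x) dμ_sc satisfies
S(z)² − zS(z) + 1 = 0 for every nonreal z. -/
theorem stmt10 (μ : Measure ℝ)
    (hμ : μ = volume.withDensity fun x : ℝ =>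
      ENNReal.ofReal ((1 / (2 * Real.pi)) * Real.sqrt (max (4 - x ^ 2) 0))) :
    IsProbabilityMeasure μ ∧
      ∀ z : ℂ, z.im ≠ 0 →
        (∫ x : ℝ, 1 / (z - x) ∂μ) ^ 2 - z * (∫ x : ℝ, 1 / (z - x) ∂μ) + 1 = 0 := by
  subst hμ
  refine ⟨isProbabilityMeasure_semicircle, fun z hz => ?_⟩
  obtain ⟨a, ha0, ha, rfl⟩ := exists_norm_lt_one_add_inv_eq hz
  change stieltjesTransform semicircle _ ^ 2 - _ * stieltjesTransform semicircle _ + 1 = 0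
  rw [stieltjesTransform_semicircle_add_inv ha0 ha]
  field_simp
  ring
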